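/- Assume additionally that: every leaf of C has a nonempty label set L(leaf) ≠ ∅; the total label set N(V(C)) contains μ and at least one further label; and no edge of C is μ-important. If u and v are two distinct μ-important vertices of C, then every internal vertex w of the unique path in C from u to v has degree exactly 2 in C, satisfies L(w) = ∅, and is itself μ-important. -/

import Mathlib

/-- The set of labels carried by a set `S` of vertices. -/
def labelSet {V M : Type*} (L : V → Set M) (S : Set V) : Set M :=
  ⋃ v ∈ S, L v

/-- The connected component of `u` in the graph `C` with the edge `s(u, v)` deleted.
For a tree `C` and an edge `uv`, `edgeSide C u v` and `edgeSide C v u` are the two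
connected components of `C − uv`. -/
def edgeSide {V : Type*} (C : SimpleGraph V) (u v : V) : Set V :=
  {w | (C.deleteEdges {s(u, v)}).Reachable u w}

/-- The edge `uv` of `C` is `μ`-important: for each of the two components `K` of `C − uv`,
the label set of `K` properly contains `{μ}`. -/
def ImportantEdge {V M : Type*} (C : SimpleGraph V) (L : V → Set M) (μ : M) (u v : V) :
    Prop :=
  C.Adj u v ∧
    (μ ∈ labelSet L (edgeSide C u v) ∧ labelSet L (edgeSide C u v) ≠ {μ}) ∧
    (μ ∈ labelSet L (edgeSide C v u) ∧ labelSet L (edgeSide C v u) ≠ {μ})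

/-- The graph `C` with the vertex `v` deleted (all edges incident to `v` removed). -/
def delVertex {V : Type*} (C : SimpleGraph V) (v : V) : SimpleGraph V :=
  C.deleteEdges {e : Sym2 V | v ∈ e}

/-- The connected component of `w` in `C − v`. -/
def vertComp {V : Type*} (C : SimpleGraph V) (v w : V) : Set V :=
  {x | (delVertex C v).Reachable w x}

/-- The vertex `v` of `C` is `μ`-important: every connected component `T` of `C − v`
has label set equal to `{μ}` or not containing `μ` at all. -/
def ImportantVertex {V M : Type*} (C : SimpleGraph V) (L : V → Set M) (μ : M) (v : V) :
    Prop :=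
  ∀ w : V, w ≠ v →
    labelSet L (vertComp C v w) = {μ} ∨ μ ∉ labelSet L (vertComp C v w)

/-!
Let `a` and `b` be the neighbours of `w` on the path towards `u` and `v`. The side of the edge
`wa` containing `w` avoids `u`, so it lies in a single component of `C − u` and its labels are
either `⊆ {μ}` or free of `μ`; the same holds for the side of `wb` containing `w`, which avoids `v`.
These two sides cover `C`, and the labels contain `μ` and some other label, so the two label sets
are disjoint. Hence everything lying in both sides is unlabelled: `w` itself, and any branch at a
third neighbour of `w`. Such a branch would contain a leaf of `C`, which is labelled, so `w` has
degree 2, and every component of `C − w` lies inside one of the two sides, making `w` important.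
-/

open SimpleGraph

section Labels

variable {V M : Type*} (L : V → Set M)

lemma labelSet_mono {S T : Set V} (h : S ⊆ T) : labelSet L S ⊆ labelSet L T :=
  Set.biUnion_subset_biUnion_left h

lemma subset_labelSet {S : Set V} {x : V} (hx : x ∈ S) : L x ⊆ labelSet L S :=
  Set.subset_biUnion_of_mem (u := L) hx

lemma labelSet_univ_subset_union {S T : Set V} (h : S ∪ T = Set.univ) :
    labelSet L Set.univ ⊆ labelSet L S ∪ labelSet L T := by
  simp only [labelSet, ← Set.biUnion_union, h, subset_refl]

lemma labelSet_subset_singleton_of_subset {μ : M} {S T : Set V} (hST : S ⊆ T)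
    (hT : μ ∈ labelSet L T → labelSet L T ⊆ {μ}) :
    μ ∈ labelSet L S → labelSet L S ⊆ {μ} :=
  fun hμ => (labelSet_mono L hST).trans (hT (labelSet_mono L hST hμ))

end Labels

lemma Set.disjoint_of_subset_union {M : Type*} {μ m : M} {X Y T : Set M} (hT : T ⊆ X ∪ Y)
    (hμ : μ ∈ T) (hm : m ∈ T) (hmμ : m ≠ μ) (hX : μ ∈ X → X ⊆ {μ}) (hY : μ ∈ Y → Y ⊆ {μ}) :
    Disjoint X Y := by
  rw [Set.disjoint_left]
  intro t htX htY
  by_cases ht : t = μ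
  · subst ht
    rcases hT hm with h | h
    · exact hmμ (hX htX h)
    · exact hmμ (hY htY h)
  · rcases hT hμ with h | h
    · exact ht (hX h htX)
    · exact ht (hY h htY)

lemma Set.eq_singleton_or_notMem_of_imp {M : Type*} {μ : M} {S : Set M}
    (h : μ ∈ S → S ⊆ {μ}) : S = {μ} ∨ μ ∉ S := by
  by_cases hμ : μ ∈ S
  · exact Or.inl ((h hμ).antisymm (Set.singleton_subset_iff.mpr hμ))
  · exact Or.inr hμ

namespace SimpleGraph

variable {V : Type*} {G : SimpleGraph V}

lemma reachable_delVertex_of_notMem_support {w s t : V} (p : G.Walk s t) (hw : w ∉ p.support) :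
    (delVertex G w).Reachable s t :=
  ⟨p.toDeleteEdges _ fun _ he hwe => hw (p.mem_support_of_mem_edges he hwe)⟩

lemma delVertex_le_deleteEdges {w : V} {e : Sym2 V} (he : w ∈ e) :
    delVertex G w ≤ G.deleteEdges {e} :=
  deleteEdges_anti (Set.singleton_subset_iff.mpr he)

lemma mem_edgeSide_swap {a b x : V} :
    x ∈ edgeSide G b a ↔ (G.deleteEdges {s(a, b)}).Reachable b x := by
  rw [edgeSide, Sym2.eq_swap]; rfl

lemma mem_edgeSide_of_adj {a b x z : V} (hx : x ∈ edgeSide G a b) (hxz : G.Adj x z) :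
    z ∈ edgeSide G a b ∨ z = b := by
  by_cases he : s(x, z) = s(a, b)
  · rcases Sym2.eq_iff.mp he with ⟨-, rfl⟩ | ⟨-, rfl⟩
    · exact Or.inr rfl
    · exact Or.inl .rfl
  · have hadj : (G.deleteEdges {s(a, b)}).Adj x z := by simp [hxz, he]
    exact Or.inl (hx.trans hadj.reachable)

lemma vertComp_subset_edgeSide (w z : V) : vertComp G w z ⊆ edgeSide G z w :=
  fun _ hx => hx.mono (delVertex_le_deleteEdges (Sym2.mem_mk_right z w))

lemma vertComp_subset_edgeSide_of_adj {w a b : V} (hwb : G.Adj w b) (hab : a ≠ b) :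
    vertComp G w b ⊆ edgeSide G w a := by
  intro x hx
  have hadj : (G.deleteEdges {s(w, a)}).Adj w b := by
    simp [hwb, hab.symm, hwb.ne']
  exact hadj.reachable.trans (hx.mono (delVertex_le_deleteEdges (Sym2.mem_mk_left w a)))

lemma edgeSide_subset_vertComp_of_notMem {u w a : V} (hu : u ∉ edgeSide G w a) :
    edgeSide G w a ⊆ vertComp G u w := by
  classical
  rintro x ⟨p⟩
  have hp : u ∉ p.support := fun h => hu ⟨p.takeUntil u h⟩
  exact (reachable_delVertex_of_notMem_support p hp).mono (deleteEdges_mono (deleteEdges_le _))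

lemma Connected.mem_edgeSide_or_mem_edgeSide (hG : G.Connected) (a w x : V) :
    x ∈ edgeSide G a w ∨ x ∈ edgeSide G w a := by
  set H := G.deleteEdges {s(a, w)}
  have step : ∀ y z, G.Adj y z → H.Reachable a y ∨ H.Reachable w y →
      H.Reachable a z ∨ H.Reachable w z := by
    intro y z hyz hy
    by_cases he : s(y, z) = s(a, w)
    · rcases Sym2.eq_iff.mp he with ⟨-, rfl⟩ | ⟨-, rfl⟩
      · exact Or.inr .rfl
      · exact Or.inl .rfl
    · have hH : H.Adj y z := by simp [H, hyz, he]
      exact hy.imp (·.trans hH.reachable) (·.trans hH.reachable)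
  have key : ∀ {y z} (q : G.Walk y z), (H.Reachable a y ∨ H.Reachable w y) →
      H.Reachable a z ∨ H.Reachable w z := by
    intro y z q
    induction q with
    | nil => exact id
    | cons h _ ih => exact ih ∘ step _ _ h
  obtain ⟨p⟩ := hG a x
  exact (key p (Or.inl .rfl)).imp id mem_edgeSide_swap.mpr

lemma Connected.exists_adj_mem_vertComp (hG : G.Connected) {w x : V} (hx : x ≠ w) :
    ∃ z, G.Adj w z ∧ x ∈ vertComp G w z := by
  obtain ⟨p, hp⟩ := hG.exists_isPath w x
  obtain ⟨z, hwz, q, rfl⟩ := Walk.exists_eq_cons_of_ne hx.symm p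
  exact ⟨z, hwz, reachable_delVertex_of_notMem_support q (Walk.cons_isPath_iff _ _ |>.mp hp).2⟩

lemma Walk.IsPath.exists_adj_adj_of_mem_support {u v w : V} {p : G.Walk u v} (hp : p.IsPath)
    (hw : w ∈ p.support) (hwu : w ≠ u) (hwv : w ≠ v) :
    ∃ a b, a ≠ b ∧ G.Adj w a ∧ G.Adj w b ∧ u ∈ vertComp G w a ∧ v ∈ vertComp G w b := by
  classical
  have hsplit : ((p.takeUntil w hw).append (p.dropUntil w hw)).IsPath := (p.take_spec hw).symm ▸ hp
  obtain ⟨a, hwa, q, hq⟩ := Walk.exists_eq_cons_of_ne hwu (p.takeUntil w hw).reverse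
  obtain ⟨b, hwb, r, hr⟩ := Walk.exists_eq_cons_of_ne hwv (p.dropUntil w hw)
  have hwq : w ∉ q.support := by
    have := (hp.takeUntil hw).reverse
    rw [hq, Walk.cons_isPath_iff] at this
    exact this.2
  have hwr : w ∉ r.support := by
    have := hp.dropUntil hw
    rw [hr, Walk.cons_isPath_iff] at this
    exact this.2
  have ha : a ∈ (p.takeUntil w hw).reverse.support := by rw [hq]; simp
  rw [Walk.support_reverse, List.mem_reverse] at ha
  have hb : b ∈ (p.dropUntil w hw).support := by rw [hr]; simp
  exact ⟨a, b, hsplit.ne_of_mem_support_of_append hwb.ne' ha hb, hwa, hwb,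
    reachable_delVertex_of_notMem_support q hwq, reachable_delVertex_of_notMem_support r hwr⟩

lemma degree_eq_two_of_forall_adj [Fintype V] [DecidableRel G.Adj] {w a b : V} (hab : a ≠ b)
    (ha : G.Adj w a) (hb : G.Adj w b) (h : ∀ c, G.Adj w c → c = a ∨ c = b) :
    G.degree w = 2 := by
  classical
  have : G.neighborFinset w = {a, b} := by
    ext c
    simp only [mem_neighborFinset, Finset.mem_insert, Finset.mem_singleton]
    exact ⟨h c, by rintro (rfl | rfl) <;> assumption⟩
  rw [← card_neighborFinset_eq_degree, this, Finset.card_pair hab]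

namespace IsTree

variable (hG : G.IsTree)
include hG

lemma notMem_edgeSide {a w : V} (h : G.Adj a w) : w ∉ edgeSide G a w :=
  isBridge_iff.mp (isAcyclic_iff_forall_adj_isBridge.mp hG.isAcyclic h)

lemma disjoint_edgeSide {a w : V} (h : G.Adj a w) :
    Disjoint (edgeSide G a w) (edgeSide G w a) := by
  rw [Set.disjoint_left]
  intro x hxa hxw
  exact hG.notMem_edgeSide h (hxa.trans (mem_edgeSide_swap.mp hxw).symm)

lemma edgeSide_subset_edgeSide {w a c : V} (hwc : G.Adj w c) (hac : a ≠ c) :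
    edgeSide G c w ⊆ edgeSide G w a :=
  (edgeSide_subset_vertComp_of_notMem (hG.notMem_edgeSide hwc.symm)).trans
    (vertComp_subset_edgeSide_of_adj hwc hac)

lemma edgeSide_union_edgeSide {w a b : V} (hwa : G.Adj w a) (hab : a ≠ b) :
    edgeSide G w a ∪ edgeSide G w b = Set.univ := by
  refine Set.eq_univ_of_forall fun x => ?_
  rcases hG.connected.mem_edgeSide_or_mem_edgeSide a w x with h | h
  · exact Or.inr (hG.edgeSide_subset_edgeSide hwa hab.symm h)
  · exact Or.inl h

lemma eq_penultimate_of_adj_of_dist_lt {w x z : V} {P : G.Walk w x} (hP : P.IsPath)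
    (hxz : G.Adj x z) (hd : G.dist w z < G.dist w x) : z = P.penultimate := by
  classical
  obtain ⟨Q, hQ, hQl⟩ := (hG.connected w z).exists_path_of_dist
  have hx : x ∉ Q.support := fun hx => by
    have := dist_le (Q.takeUntil x hx)
    have := Q.length_takeUntil_le_length hx
    omega
  exact hG.isAcyclic.eq_penultimate_of_adj_end hP hxz
    (hG.isAcyclic.mem_support_of_ne_mem_support_of_adj_of_isPath hP hQ hxz hx)

lemma exists_degree_eq_one_mem_edgeSide [Fintype V] [DecidableRel G.Adj] {c w : V}
    (h : G.Adj c w) : ∃ x ∈ edgeSide G c w, G.degree x = 1 := by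
  -- a vertex of the branch farthest from `w` is a leaf
  obtain ⟨x, hxB, hmax⟩ :=
    Set.exists_max_image (edgeSide G c w) (G.dist w) (Set.toFinite _) ⟨c, .rfl⟩
  have hxw : x ≠ w := fun h' => hG.notMem_edgeSide h (h' ▸ hxB)
  obtain ⟨P, hP, -⟩ := (hG.connected w x).exists_path_of_dist
  have hlt : ∀ z, G.Adj x z → G.dist w z < G.dist w x := by
    intro z hxz
    rcases mem_edgeSide_of_adj hxB hxz with hz | rfl
    · exact (hmax z hz).lt_of_ne (hG.dist_ne_of_adj w hxz).symm
    · rw [dist_self]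
      exact Nat.pos_of_ne_zero (hG.connected.dist_eq_zero_iff.not.mpr hxw.symm)
  refine ⟨x, hxB, degree_eq_one_iff_existsUnique_adj.mpr ⟨P.penultimate, ?_, fun z hxz =>
    hG.eq_penultimate_of_adj_of_dist_lt hP hxz (hlt z hxz)⟩⟩
  exact (P.adj_penultimate (Walk.not_nil_of_ne hxw.symm)).symm

end IsTree

end SimpleGraph

section Importance

variable {V M : Type*} {C : SimpleGraph V} {L : V → Set M} {μ : M}

lemma ImportantVertex.labelSet_edgeSide_subset_singleton {u w a : V}
    (hu : ImportantVertex C L μ u) (hua : u ∉ edgeSide C w a)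
    (hμ : μ ∈ labelSet L (edgeSide C w a)) : labelSet L (edgeSide C w a) ⊆ {μ} := by
  have hsub := labelSet_mono L (edgeSide_subset_vertComp_of_notMem hua)
  have hwu : w ≠ u := fun h => hua (h ▸ .rfl)
  rcases hu w hwu with h | h
  · exact hsub.trans h.le
  · exact absurd (hsub hμ) h

lemma importantVertex_of_forall_adj (hC : C.Connected) {w : V}
    (h : ∀ z, C.Adj w z → μ ∈ labelSet L (edgeSide C z w) → labelSet L (edgeSide C z w) ⊆ {μ}) :
    ImportantVertex C L μ w := by
  intro x hx
  obtain ⟨z, hwz, hxz⟩ := hC.exists_adj_mem_vertComp hx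
  have hsub : vertComp C w x ⊆ edgeSide C z w :=
    fun y hy => vertComp_subset_edgeSide w z (hxz.trans hy)
  exact Set.eq_singleton_or_notMem_of_imp (labelSet_subset_singleton_of_subset L hsub (h z hwz))

end Importance

theorem statement_5_general {V M : Type*} [Fintype V] (C : SimpleGraph V) [DecidableRel C.Adj]
    (hC : C.IsTree) (L : V → Set M) (μ : M)
    (hleaf : ∀ v : V, C.degree v = 1 → L v ≠ ∅)
    (htotalμ : μ ∈ labelSet L Set.univ)
    (htotal2 : ∃ m : M, m ∈ labelSet L Set.univ ∧ m ≠ μ)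
    (u v : V)
    (hu : ImportantVertex C L μ u) (hv : ImportantVertex C L μ v)
    (p : C.Walk u v) (hp : p.IsPath)
    (w : V) (hw : w ∈ p.support) (hwu : w ≠ u) (hwv : w ≠ v) :
    C.degree w = 2 ∧ L w = ∅ ∧ ImportantVertex C L μ w := by
  obtain ⟨m, hm, hmμ⟩ := htotal2
  obtain ⟨a, b, hab, hwa, hwb, hua, hvb⟩ := hp.exists_adj_adj_of_mem_support hw hwu hwv
  have hA := hu.labelSet_edgeSide_subset_singleton
    (Set.disjoint_left.mp (hC.disjoint_edgeSide hwa.symm) (vertComp_subset_edgeSide w a hua))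
  have hB := hv.labelSet_edgeSide_subset_singleton
    (Set.disjoint_left.mp (hC.disjoint_edgeSide hwb.symm) (vertComp_subset_edgeSide w b hvb))
  have hdisj : Disjoint (labelSet L (edgeSide C w a)) (labelSet L (edgeSide C w b)) :=
    Set.disjoint_of_subset_union
      (labelSet_univ_subset_union L (hC.edgeSide_union_edgeSide hwa hab)) htotalμ hm hmμ hA hB
  have hempty : ∀ x ∈ edgeSide C w a ∩ edgeSide C w b, L x = ∅ := fun x hx =>
    Set.subset_empty_iff.mp (hdisj (subset_labelSet L hx.1) (subset_labelSet L hx.2))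
  have hnbr : ∀ c, C.Adj w c → c = a ∨ c = b := by
    intro c hwc
    by_contra! hc
    obtain ⟨x, hx, hdeg⟩ := hC.exists_degree_eq_one_mem_edgeSide hwc.symm
    exact hleaf x hdeg (hempty x ⟨hC.edgeSide_subset_edgeSide hwc hc.1.symm hx,
      hC.edgeSide_subset_edgeSide hwc hc.2.symm hx⟩)
  refine ⟨degree_eq_two_of_forall_adj hab hwa hwb hnbr, hempty w ⟨.rfl, .rfl⟩,
    importantVertex_of_forall_adj hC.connected fun c hwc => ?_⟩
  rcases hnbr c hwc with rfl | rfl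
  · exact labelSet_subset_singleton_of_subset L (hC.edgeSide_subset_edgeSide hwa hab.symm) hB
  · exact labelSet_subset_singleton_of_subset L (hC.edgeSide_subset_edgeSide hwb hab) hA

/-- Assume every leaf of the finite tree `C` has a nonempty label set, the
total label set contains `μ` and at least one further label, and no edge of `C` is
`μ`-important. If `u ≠ v` are `μ`-important vertices, then every internal vertex `w` of
the unique path from `u` to `v` has degree exactly `2`, has `L w = ∅`, and is itself
`μ`-important. -/
theorem statement_5 {V M : Type*} [Fintype V] (C : SimpleGraph V) [DecidableRel C.Adj]
    (hC : C.IsTree) (L : V → Set M) (μ : M)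
    (hleaf : ∀ v : V, C.degree v = 1 → L v ≠ ∅)
    (htotalμ : μ ∈ labelSet L Set.univ)
    (htotal2 : ∃ m : M, m ∈ labelSet L Set.univ ∧ m ≠ μ)
    (hnoedge : ∀ a b : V, ¬ ImportantEdge C L μ a b)
    (u v : V) (huv : u ≠ v)
    (hu : ImportantVertex C L μ u) (hv : ImportantVertex C L μ v)
    (p : C.Walk u v) (hp : p.IsPath)
    (w : V) (hw : w ∈ p.support) (hwu : w ≠ u) (hwv : w ≠ v) :
    C.degree w = 2 ∧ L w = ∅ ∧ ImportantVertex C L μ w :=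
  statement_5_general C hC L μ hleaf htotalμ htotal2 u v hu hv p hp w hw hwu hwv
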